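/- arXiv:1405.1110 — 9 statements merged into one kernel-verified Lean document; each statement's English description precedes it below -/
import Mathlib

section
/- If f : (a, b) → ℝ satisfies the Riccati equation f' = -(1 + f²) and t₀ ∈ (a, b) with f(t₀) < cot(t₀) for some t₀ ∈ (0, π), then f cannot be extended as a solution on all of (t₀, π); more precisely there exists d ∈ (t₀, π) such that f(t) → -∞ as t → d⁻. -/
open Real Set Filter

/-- A solution of the Riccati equation `f' = -(1 + f²)` with `f t₀ < cot t₀` for some
`t₀ ∈ (0, π)` cannot be extended as a solution to all of `(t₀, π)`: there is a `d ∈ (t₀, π)`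
such that any solution extending `f` past `t₀` up to `d` tends to `-∞` as `t → d⁻`. -/
theorem stmt_1 (a b t₀ : ℝ) (f : ℝ → ℝ)
    (ht₀ab : t₀ ∈ Set.Ioo a b) (ht₀ : t₀ ∈ Set.Ioo 0 π)
    (hf : ∀ t ∈ Set.Ioo a b, HasDerivAt f (-(1 + f t ^ 2)) t)
    (hlt : f t₀ < Real.cot t₀) :
    ∃ d ∈ Set.Ioo t₀ π,
      ∀ g : ℝ → ℝ, g t₀ = f t₀ →
        (∀ t ∈ Set.Ico t₀ d, HasDerivAt g (-(1 + g t ^ 2)) t) →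
        Filter.Tendsto g (nhdsWithin d (Set.Iio d)) Filter.atBot := by
  obtain ⟨ht₀0, ht₀π⟩ := ht₀
  set A : ℝ := Real.arctan (f t₀) + t₀ with hA
  set d : ℝ := A + π / 2 with hd
  -- `d ∈ (t₀, π)`
  have harctan_lt : Real.arctan (f t₀) < π / 2 - t₀ := by
    have h1 : Real.cot t₀ = Real.tan (π / 2 - t₀) := by
      rw [Real.tan_pi_div_two_sub, Real.cot_eq_cos_div_sin, Real.tan_eq_sin_div_cos,
        inv_div]
    have h2 : Real.arctan (f t₀) < Real.arctan (Real.tan (π / 2 - t₀)) :=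
      Real.arctan_strictMono (h1 ▸ hlt)
    rwa [Real.arctan_tan (by linarith [Real.pi_pos]) (by linarith)] at h2
  have hdt₀ : t₀ < d := by
    have := Real.neg_pi_div_two_lt_arctan (f t₀)
    simp only [hd, hA]; linarith
  have hdπ : d < π := by simp only [hd, hA]; linarith
  refine ⟨d, ⟨hdt₀, hdπ⟩, ?_⟩
  intro g hg0 hg
  -- `arctan (g t) = A - t` on `[t₀, d)`
  have key : ∀ t ∈ Set.Ico t₀ d, Real.arctan (g t) = A - t := by
    intro t ⟨ht1, ht2⟩
    have hsub : Set.Icc t₀ t ⊆ Set.Ico t₀ d := fun x hx => ⟨hx.1, lt_of_le_of_lt hx.2 ht2⟩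
    have hderiv : ∀ x ∈ Set.Ico t₀ t,
        HasDerivWithinAt (fun s => Real.arctan (g s)) (-1 : ℝ) (Set.Ici x) x := by
      intro x hx
      have hx' : x ∈ Set.Ico t₀ d := ⟨hx.1, lt_of_lt_of_le hx.2 ht2.le⟩
      have h1 : HasDerivAt (fun s => Real.arctan (g s))
          (1 / (1 + g x ^ 2) * (-(1 + g x ^ 2))) x :=
        (Real.hasDerivAt_arctan (g x)).comp x (hg x hx')
      have hpos : (0:ℝ) < 1 + g x ^ 2 := by positivity
      have : (1 / (1 + g x ^ 2)) * (-(1 + g x ^ 2)) = (-1 : ℝ) := by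
        field_simp
      rw [this] at h1
      exact h1.hasDerivWithinAt
    have hderiv2 : ∀ x ∈ Set.Ico t₀ t,
        HasDerivWithinAt (fun s => A - s) (-1 : ℝ) (Set.Ici x) x := by
      intro x _
      simpa using ((hasDerivAt_id x).const_sub A).hasDerivWithinAt
    have hcont : ContinuousOn (fun s => Real.arctan (g s)) (Set.Icc t₀ t) := by
      intro x hx
      exact (Real.continuous_arctan.continuousAt.comp
        (hg x (hsub hx)).continuousAt).continuousWithinAt
    have hcont2 : ContinuousOn (fun s => A - s) (Set.Icc t₀ t) :=
      (continuous_const.sub continuous_id).continuousOn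
    have h0 : Real.arctan (g t₀) = A - t₀ := by
      rw [hg0, hA]; ring
    have := eq_of_has_deriv_right_eq hderiv hderiv2 hcont hcont2 h0 t
      ⟨ht1, le_refl t⟩
    exact this
  -- hence `g t = tan (A - t)` near `d` from the left
  have heq : g =ᶠ[nhdsWithin d (Set.Iio d)] fun t => Real.tan (A - t) := by
    filter_upwards [Ioo_mem_nhdsLT_of_mem (Set.mem_Ioc.mpr ⟨hdt₀, le_refl d⟩)] with t ht
    rw [← key t ⟨ht.1.le, ht.2⟩, Real.tan_arctan]
  -- `tan (A - t) → -∞` as `t → d⁻`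
  have hAd : A - d = -(π / 2) := by rw [hd]; ring
  have htend1 : Filter.Tendsto (fun t => A - t) (nhdsWithin d (Set.Iio d))
      (nhdsWithin (-(π / 2)) (Set.Ioi (-(π / 2)))) := by
    rw [← hAd]
    apply tendsto_nhdsWithin_of_tendsto_nhds_of_eventually_within
    · exact ((continuous_const.sub continuous_id).tendsto d).mono_left nhdsWithin_le_nhds
    · filter_upwards [self_mem_nhdsWithin] with t ht
      exact sub_lt_sub_left ht A
  have htend : Filter.Tendsto (fun t => Real.tan (A - t)) (nhdsWithin d (Set.Iio d))
      Filter.atBot := Real.tendsto_tan_neg_pi_div_two.comp htend1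
  exact htend.congr' heq.symm
end

section
/- If f : (a, b) → ℝ satisfies f' = -(1 + f²) and t₀ ∈ (0, π) ∩ (a, b) with f(t₀) > cot(t₀), then there exists d ∈ (0, t₀) such that f(t) → +∞ as t → d⁺; i.e., the maximal solution through (t₀, f(t₀)) blows up backwards at a time in (0, t₀). -/
open Real Set Filter

/-- A solution of the Riccati equation `f' = -(1 + f²)` with `f t₀ > cot t₀` for some
`t₀ ∈ (0, π)` blows up backwards: there is `d ∈ (0, t₀)` such that any solution agreeing
with `f` at `t₀` and solving on `(d, t₀]` tends to `+∞` as `t → d⁺`. -/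
theorem stmt_2 (a b t₀ : ℝ) (f : ℝ → ℝ)
    (ht₀ab : t₀ ∈ Set.Ioo a b) (ht₀ : t₀ ∈ Set.Ioo 0 π)
    (hf : ∀ t ∈ Set.Ioo a b, HasDerivAt f (-(1 + f t ^ 2)) t)
    (hgt : Real.cot t₀ < f t₀) :
    ∃ d ∈ Set.Ioo 0 t₀,
      ∀ g : ℝ → ℝ, g t₀ = f t₀ →
        (∀ t ∈ Set.Ioc d t₀, HasDerivAt g (-(1 + g t ^ 2)) t) →
        Filter.Tendsto g (nhdsWithin d (Set.Ioi d)) Filter.atTop := by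
  obtain ⟨ht₀0, ht₀π⟩ := ht₀
  set A := Real.arctan (f t₀) with hA
  set d := t₀ + A - π / 2 with hd
  -- cot t₀ = tan (π/2 - t₀)
  have hcot : Real.cot t₀ = Real.tan (π / 2 - t₀) := by
    rw [Real.tan_pi_div_two_sub, Real.cot_eq_cos_div_sin, Real.tan_eq_sin_div_cos, inv_div]
  have hAgt : π / 2 - t₀ < A := by
    have h1 : -(π / 2) < π / 2 - t₀ := by linarith [Real.pi_pos]
    have h2 : π / 2 - t₀ < π / 2 := by linarith
    calc π / 2 - t₀ = Real.arctan (Real.tan (π / 2 - t₀)) := (Real.arctan_tan h1 h2).symm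
      _ < A := Real.arctan_strictMono (by rw [← hcot]; exact hgt)
  have hd0 : 0 < d := by simp only [hd]; linarith
  have hdt : d < t₀ := by
    have := Real.arctan_lt_pi_div_two (f t₀)
    simp only [hd]; linarith
  refine ⟨d, ⟨hd0, hdt⟩, ?_⟩
  intro g hg0 hg
  -- arctan (g t) + t is constant on (d, t₀]
  have hconst : ∀ t ∈ Set.Ioc d t₀, Real.arctan (g t) + t = A + t₀ := by
    intro t ht
    have key : ∀ x ∈ Set.Icc t t₀, (fun s => Real.arctan (g s) + s) x =
        (fun s => Real.arctan (g s) + s) t := by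
      apply constant_of_has_deriv_right_zero
      · intro x hx
        have hx' : x ∈ Set.Ioc d t₀ := ⟨lt_of_lt_of_le ht.1 hx.1, hx.2⟩
        exact (((Real.continuous_arctan.continuousAt.comp
          (hg x hx').continuousAt).add continuousAt_id).continuousWithinAt)
      · intro x hx
        have hx' : x ∈ Set.Ioc d t₀ := ⟨lt_of_lt_of_le ht.1 hx.1, le_of_lt hx.2⟩
        have h1 : HasDerivAt (fun s => Real.arctan (g s) + s)
            (1 / (1 + g x ^ 2) * (-(1 + g x ^ 2)) + 1) x :=
          ((Real.hasDerivAt_arctan (g x)).comp x (hg x hx')).add (hasDerivAt_id x)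
        have hne : (1 : ℝ) + g x ^ 2 ≠ 0 := by positivity
        have : 1 / (1 + g x ^ 2) * (-(1 + g x ^ 2)) + 1 = 0 := by field_simp; ring
        rw [this] at h1
        exact h1.hasDerivWithinAt
    have := key t₀ ⟨ht.2, le_refl _⟩
    simp only at this
    rw [hg0] at this
    linarith [this]
  -- hence g t = tan (A + t₀ - t) on (d, t₀]
  have hgeq : ∀ t ∈ Set.Ioc d t₀, g t = Real.tan (A + t₀ - t) := by
    intro t ht
    have h1 := hconst t ht
    have : Real.arctan (g t) = A + t₀ - t := by linarith
    rw [← this, Real.tan_arctan]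
  -- the model blows up
  have hmodel : Filter.Tendsto (fun t => Real.tan (A + t₀ - t))
      (nhdsWithin d (Set.Ioi d)) Filter.atTop := by
    apply Real.tendsto_tan_pi_div_two.comp
    have heq : A + t₀ - d = π / 2 := by simp only [hd]; ring
    rw [tendsto_nhdsWithin_iff]
    constructor
    · have : Filter.Tendsto (fun t => A + t₀ - t) (nhdsWithin d (Set.Ioi d)) (nhds (A + t₀ - d)) :=
        ((continuous_const.sub continuous_id).tendsto d).mono_left nhdsWithin_le_nhds
      rwa [heq] at this
    · filter_upwards [self_mem_nhdsWithin] with x hx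
      simp only [Set.mem_Iio]
      have hdx : d < x := hx
      rw [hd] at hdx
      linarith
  apply hmodel.congr'
  filter_upwards [Ioc_mem_nhdsGT_of_mem ⟨le_refl d, hdt⟩] with t ht
  exact (hgeq t ht).symm
end

section
/- Riccati comparison: let s, f : [a, b] → ℝ be differentiable with f' + f² + 1 = 0, s' + s² + r = 0 where r : [a,b] → ℝ satisfies r ≥ 1, and suppose f(t₀) = s(t₀) for some t₀ ∈ [a, b]. Then s ≥ f on [a, t₀] and s ≤ f on [t₀, b]. -/
open Real Set

/-! The difference `g = s - f` satisfies `g' = -(s + f) g - (r - 1) ≤ -(s + f) g`. With `P` an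
antiderivative of `s + f`, the product `g · exp P` therefore has nonpositive derivative, so it is
antitone on `[a, b]`; it vanishes at `t₀`, hence is `≥ 0` before `t₀` and `≤ 0` after it. -/

theorem ContinuousOn.exists_hasDerivWithinAt_Icc {a b : ℝ} {p : ℝ → ℝ} (hab : a ≤ b)
    (hp : ContinuousOn p (Icc a b)) :
    ∃ P : ℝ → ℝ, ∀ t ∈ Icc a b, HasDerivWithinAt P (p t) (Icc a b) t := by
  have hq : Continuous (IccExtend hab ((Icc a b).domRestrict p)) :=
    continuous_IccExtend_iff.mpr hp.domRestrict
  refine ⟨fun t => ∫ x in a..t, IccExtend hab ((Icc a b).domRestrict p) x, fun t ht => ?_⟩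
  have := (hq.integral_hasStrictDerivAt a t).hasDerivAt.hasDerivWithinAt (s := Icc a b)
  rwa [IccExtend_of_mem _ _ ht] at this

theorem antitoneOn_mul_exp_of_deriv_le_neg_mul {D : Set ℝ} (hD : Convex ℝ D)
    {g g' p P : ℝ → ℝ}
    (hg : ∀ t ∈ D, HasDerivWithinAt g (g' t) D t)
    (hP : ∀ t ∈ D, HasDerivWithinAt P (p t) D t)
    (hle : ∀ t ∈ interior D, g' t ≤ -(p t * g t)) :
    AntitoneOn (fun t => g t * exp (P t)) D := by
  have hderiv : ∀ t ∈ D, HasDerivWithinAt (fun t => g t * exp (P t))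
      ((g' t + p t * g t) * exp (P t)) D t := fun t ht =>
    ((hg t ht).mul (hP t ht).exp).congr_deriv (by ring)
  refine antitoneOn_of_hasDerivWithinAt_nonpos hD
    (fun t ht => (hderiv t ht).continuousWithinAt)
    (fun t ht => (hderiv t (interior_subset ht)).mono interior_subset) fun t ht => ?_
  exact mul_nonpos_of_nonpos_of_nonneg (by linarith [hle t ht]) (exp_pos _).le

theorem nonneg_left_nonpos_right_of_deriv_le_neg_mul {a b t₀ : ℝ} {g g' p : ℝ → ℝ}
    (hp : ContinuousOn p (Icc a b))
    (hg : ∀ t ∈ Icc a b, HasDerivWithinAt g (g' t) (Icc a b) t)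
    (hle : ∀ t ∈ Icc a b, g' t ≤ -(p t * g t))
    (ht₀ : t₀ ∈ Icc a b) (hg₀ : g t₀ = 0) :
    (∀ t ∈ Icc a t₀, 0 ≤ g t) ∧ (∀ t ∈ Icc t₀ b, g t ≤ 0) := by
  obtain ⟨P, hP⟩ := hp.exists_hasDerivWithinAt_Icc (ht₀.1.trans ht₀.2)
  have hanti := antitoneOn_mul_exp_of_deriv_le_neg_mul (convex_Icc a b) hg hP
    fun t ht => hle t (interior_subset ht)
  constructor
  · rintro t ⟨hat, htt₀⟩
    have : g t₀ * exp (P t₀) ≤ g t * exp (P t) := hanti ⟨hat, htt₀.trans ht₀.2⟩ ht₀ htt₀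
    rw [hg₀, zero_mul] at this
    exact nonneg_of_mul_nonneg_left this (exp_pos _)
  · rintro t ⟨ht₀t, htb⟩
    have : g t * exp (P t) ≤ g t₀ * exp (P t₀) := hanti ht₀ ⟨ht₀.1.trans ht₀t, htb⟩ ht₀t
    rw [hg₀, zero_mul] at this
    exact nonpos_of_mul_nonpos_left this (exp_pos _)

theorem stmt_3_general (a b t₀ : ℝ) (f s r : ℝ → ℝ)
    (ht₀ : t₀ ∈ Set.Icc a b)
    (hr : ∀ t ∈ Set.Icc a b, 1 ≤ r t)
    (hf : ∀ t ∈ Set.Icc a b, HasDerivWithinAt f (-(f t ^ 2 + 1)) (Set.Icc a b) t)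
    (hs : ∀ t ∈ Set.Icc a b, HasDerivWithinAt s (-(s t ^ 2 + r t)) (Set.Icc a b) t)
    (heq : f t₀ = s t₀) :
    (∀ t ∈ Set.Icc a t₀, f t ≤ s t) ∧ (∀ t ∈ Set.Icc t₀ b, s t ≤ f t) := by
  have hsum : ContinuousOn (fun t => s t + f t) (Icc a b) :=
    fun t ht => (hs t ht).continuousWithinAt.add (hf t ht).continuousWithinAt
  have hle : ∀ t ∈ Icc a b, -(s t ^ 2 + r t) - -(f t ^ 2 + 1) ≤ -((s t + f t) * (s t - f t)) :=
    fun t ht => by linarith [hr t ht]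
  obtain ⟨hleft, hright⟩ := nonneg_left_nonpos_right_of_deriv_le_neg_mul hsum
    (fun t ht => (hs t ht).sub (hf t ht)) hle ht₀ (sub_eq_zero.mpr heq.symm)
  exact ⟨fun t ht => sub_nonneg.mp (hleft t ht), fun t ht => sub_nonpos.mp (hright t ht)⟩

/-- Riccati comparison: if `f' + f² + 1 = 0`, `s' + s² + r = 0` with `r ≥ 1` on `[a, b]`,
and `f t₀ = s t₀` for some `t₀ ∈ [a, b]`, then `s ≥ f` on `[a, t₀]` and `s ≤ f` on `[t₀, b]`. -/
theorem stmt_3 (a b t₀ : ℝ) (f s r : ℝ → ℝ) (hab : a ≤ b)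
    (ht₀ : t₀ ∈ Set.Icc a b)
    (hrc : ContinuousOn r (Set.Icc a b))
    (hr : ∀ t ∈ Set.Icc a b, 1 ≤ r t)
    (hf : ∀ t ∈ Set.Icc a b, HasDerivWithinAt f (-(f t ^ 2 + 1)) (Set.Icc a b) t)
    (hs : ∀ t ∈ Set.Icc a b, HasDerivWithinAt s (-(s t ^ 2 + r t)) (Set.Icc a b) t)
    (heq : f t₀ = s t₀) :
    (∀ t ∈ Set.Icc a t₀, f t ≤ s t) ∧ (∀ t ∈ Set.Icc t₀ b, s t ≤ f t) :=
  stmt_3_general a b t₀ f s r ht₀ hr hf hs heq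
end

section
/- Let s : (0, π) → ℝ be differentiable satisfying s' + s² + r = 0 with r : (0,π) → ℝ continuous and r ≥ 1. If s(t) ≥ cot(t) for all t ∈ (0, π), then s(t) = cot(t) for all t ∈ (0, π). -/
/-!
With `g = sin² · (s - cot)`, the Riccati inequality `s' + s² + 1 ≤ 0` gives
`g' = sin² · (s' + s² + 1) - (sin · s - cos)² ≤ 0`, so `g` is nonincreasing on `(0, π)`.
If `g (t₀) = c > 0`, then `sin² t · s t ≥ c` near `0`; but `s' ≤ -s²` forces `1/s` to grow at
least at unit rate, so `t · s t ≤ 1`, and `c ≤ t² · s t ≤ t` fails for small `t`.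
Hence `g ≤ 0`, i.e. `s ≤ cot`, which together with `s ≥ cot` gives equality.
-/

open Real Set

noncomputable def cotExcess (s : ℝ → ℝ) (t : ℝ) : ℝ := sin t ^ 2 * (s t - cot t)

theorem cotExcess_eq (s : ℝ → ℝ) (t : ℝ) :
    cotExcess s t = sin t ^ 2 * s t - sin t * cos t := by
  rcases eq_or_ne (sin t) 0 with h | h
  · simp [cotExcess, h]
  · rw [cotExcess, cot_eq_cos_div_sin]
    field_simp

section Riccati

variable {s s' : ℝ → ℝ} {a b : ℝ}

theorem sub_mul_le_one_of_hasDerivAt_le_neg_sq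
    (hs : ∀ t ∈ Ioo a b, HasDerivAt s (s' t) t)
    (hs' : ∀ t ∈ Ioo a b, s' t ≤ -s t ^ 2)
    (hpos : ∀ t ∈ Ioo a b, 0 < s t) :
    ∀ t ∈ Ioo a b, (t - a) * s t ≤ 1 := by
  have hmono : MonotoneOn (fun t => (s t)⁻¹ - t) (Ioo a b) := by
    refine monotoneOn_of_hasDerivWithinAt_nonneg (convex_Ioo a b)
      (f' := fun t => -s' t / s t ^ 2 - 1) ?_ ?_ ?_
    · exact fun t ht => (((hs t ht).inv (hpos t ht).ne').sub (hasDerivAt_id t)).continuousAt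
        |>.continuousWithinAt
    · rw [interior_Ioo]
      exact fun t ht => (((hs t ht).inv (hpos t ht).ne').sub (hasDerivAt_id t)).hasDerivWithinAt
    · rw [interior_Ioo]
      intro t ht
      have : 1 ≤ -s' t / s t ^ 2 := by
        rw [le_div_iff₀ (pow_pos (hpos t ht) 2)]
        linarith [hs' t ht]
      linarith
  intro t ht
  by_contra! hlt
  have hst := inv_pos.2 (hpos t ht)
  have hinv : (s t)⁻¹ < t - a := by
    rw [inv_lt_iff_one_lt_mul₀ (hpos t ht)]
    linarith
  -- `1/s` grows at least at unit rate, so `1/s x ≤ 1/s t - (t - x) = 0`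
  set x := t - (s t)⁻¹
  have hx : x ∈ Ioo a b := ⟨by linarith, by linarith [ht.2]⟩
  have hxt := hmono hx ht (by linarith)
  linarith [inv_pos.2 (hpos x hx)]

theorem hasDerivAt_cotExcess {s' t : ℝ} (hs : HasDerivAt s s' t) :
    HasDerivAt (cotExcess s)
      (sin t ^ 2 * (s' + s t ^ 2 + 1) - (sin t * s t - cos t) ^ 2) t := by
  rw [show cotExcess s = fun t => sin t ^ 2 * s t - sin t * cos t from
    funext (cotExcess_eq s)]
  refine ((((hasDerivAt_sin t).pow 2).mul hs).sub
    ((hasDerivAt_sin t).mul (hasDerivAt_cos t))).congr_deriv ?_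
  simp only [Pi.pow_apply]
  ring

theorem antitoneOn_cotExcess
    (hs : ∀ t ∈ Ioo a b, HasDerivAt s (s' t) t)
    (hs' : ∀ t ∈ Ioo a b, s' t + s t ^ 2 + 1 ≤ 0) :
    AntitoneOn (cotExcess s) (Ioo a b) := by
  refine antitoneOn_of_hasDerivWithinAt_nonpos (convex_Ioo a b)
    (f' := fun t => sin t ^ 2 * (s' t + s t ^ 2 + 1) - (sin t * s t - cos t) ^ 2) ?_ ?_ ?_
  · exact fun t ht => (hasDerivAt_cotExcess (hs t ht)).continuousAt.continuousWithinAt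
  · rw [interior_Ioo]
    exact fun t ht => (hasDerivAt_cotExcess (hs t ht)).hasDerivWithinAt
  · rw [interior_Ioo]
    intro t ht
    have := mul_nonpos_of_nonneg_of_nonpos (sq_nonneg (sin t)) (hs' t ht)
    nlinarith [sq_nonneg (sin t * s t - cos t)]

theorem cotExcess_nonpos
    (hs : ∀ t ∈ Ioo 0 π, HasDerivAt s (s' t) t)
    (hs' : ∀ t ∈ Ioo 0 π, s' t + s t ^ 2 + 1 ≤ 0) :
    ∀ t ∈ Ioo 0 π, cotExcess s t ≤ 0 := by
  intro t₀ ht₀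
  by_contra! hc
  set c := cotExcess s t₀
  set m := min t₀ (π / 2)
  have hm : 0 < m := lt_min ht₀.1 (by positivity)
  have hsub : Ioo 0 m ⊆ Ioo 0 π :=
    Ioo_subset_Ioo_right ((min_le_right _ _).trans (by linarith [pi_pos]))
  have hsin_sq_mul : ∀ t ∈ Ioo 0 m, c ≤ sin t ^ 2 * s t := by
    intro t ht
    have hct : c ≤ cotExcess s t :=
      antitoneOn_cotExcess hs hs' (hsub ht) ht₀ (ht.2.le.trans (min_le_left _ _))
    have hcos : 0 ≤ cos t :=
      cos_nonneg_of_mem_Icc ⟨by linarith [ht.1, pi_pos], ht.2.le.trans (min_le_right _ _)⟩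
    have hsin : 0 < sin t := sin_pos_of_pos_of_lt_pi ht.1 (hsub ht).2
    rw [cotExcess_eq] at hct
    nlinarith [mul_nonneg hsin.le hcos]
  have hpos : ∀ t ∈ Ioo 0 m, 0 < s t := fun t ht =>
    pos_of_mul_pos_right (hc.trans_le (hsin_sq_mul t ht)) (sq_nonneg _)
  have hbound := sub_mul_le_one_of_hasDerivAt_le_neg_sq (fun t ht => hs t (hsub ht))
    (fun t ht => by linarith [hs' t (hsub ht)]) hpos
  have hc_le : ∀ t ∈ Ioo 0 m, c ≤ t := by
    intro t ht
    have hsin : sin t ^ 2 ≤ t ^ 2 :=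
      pow_le_pow_left₀ (sin_pos_of_pos_of_lt_pi ht.1 (hsub ht).2).le (sin_le ht.1.le) 2
    have := hbound t ht
    rw [sub_zero] at this
    nlinarith [hsin_sq_mul t ht, hpos t ht, ht.1]
  have := hc_le (min m c / 2) ⟨by positivity, by linarith [min_le_left m c, lt_min hm hc]⟩
  linarith [min_le_right m c, lt_min hm hc]

theorem le_cot_of_hasDerivAt
    (hs : ∀ t ∈ Ioo 0 π, HasDerivAt s (s' t) t)
    (hs' : ∀ t ∈ Ioo 0 π, s' t + s t ^ 2 + 1 ≤ 0) :
    ∀ t ∈ Ioo 0 π, s t ≤ cot t := fun t ht =>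
  sub_nonpos.1 <| nonpos_of_mul_nonpos_right (cotExcess_nonpos hs hs' t ht)
    (pow_pos (sin_pos_of_pos_of_lt_pi ht.1 ht.2) 2)

end Riccati

theorem stmt_5_general (s r : ℝ → ℝ)
    (hs : ∀ t ∈ Set.Ioo 0 π, HasDerivAt s (-(s t ^ 2 + r t)) t)
    (hr : ∀ t ∈ Set.Ioo 0 π, 1 ≤ r t)
    (hge : ∀ t ∈ Set.Ioo 0 π, Real.cot t ≤ s t) :
    ∀ t ∈ Set.Ioo 0 π, s t = Real.cot t := fun t ht =>
  le_antisymm (le_cot_of_hasDerivAt hs (fun t ht => by linarith [hr t ht]) t ht) (hge t ht)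

/-- If `s' + s² + r = 0` on `(0, π)` with `r ≥ 1` continuous and `s ≥ cot` everywhere on
`(0, π)`, then `s = cot` on `(0, π)`. -/
theorem stmt_5 (s r : ℝ → ℝ)
    (hs : ∀ t ∈ Set.Ioo 0 π, HasDerivAt s (-(s t ^ 2 + r t)) t)
    (hrc : ContinuousOn r (Set.Ioo 0 π))
    (hr : ∀ t ∈ Set.Ioo 0 π, 1 ≤ r t)
    (hge : ∀ t ∈ Set.Ioo 0 π, Real.cot t ≤ s t) :
    ∀ t ∈ Set.Ioo 0 π, s t = Real.cot t :=
  stmt_5_general s r hs hr hge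
end

section
/- Let s : (α, π) → ℝ be differentiable with s' + s² + r = 0, r continuous, r ≥ 1, where α ∈ [0, π), and suppose s extends continuously to α with s(α) ≤ cot(α) (this condition being vacuous if α = 0). Then s(t) = cot(t) for all t ∈ (α, π), and consequently r(t) = 1 for all t ∈ (α, π). -/
/-!
Pass to the angle: `v = arctan ∘ s + id` satisfies `v' = (1 - r) / (1 + s²) ≤ 0`, and
`s = cot` on `(0, π)` exactly where `v = π/2`. As `|arctan| < π/2`, near `π` we have
`v t > t - π/2 → π/2`, so the antitone `v` is `≥ π/2`. Near `α` either `v t < t + π/2 → π/2`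
(when `α = 0`) or `v → arctan L + α ≤ arctan (cot α) + α = π/2` (when `α > 0`), so `v ≤ π/2`.
Hence `v ≡ π/2`, i.e. `s = cot`, and then `v' = 0` forces `r = 1`.
-/

open Real Set Filter Topology

lemma Real.arctan_cot {x : ℝ} (h₀ : 0 < x) (hπ : x < π) : arctan (cot x) = π / 2 - x := by
  rw [← tan_inv_eq_cot, ← tan_pi_div_two_sub, arctan_tan (by linarith) (by linarith)]

lemma AntitoneOn.le_of_forall_le_of_tendsto_nhdsGT {f g : ℝ → ℝ} {a b t ℓ : ℝ}
    (hf : AntitoneOn f (Ioo a b)) (ht : t ∈ Ioo a b) (hfg : ∀ x ∈ Ioo a t, f x ≤ g x)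
    (hg : Tendsto g (𝓝[>] a) (𝓝 ℓ)) : f t ≤ ℓ := by
  refine ge_of_tendsto hg ?_
  filter_upwards [Ioo_mem_nhdsGT ht.1] with x hx
  exact (hf ⟨hx.1, hx.2.trans ht.2⟩ ht hx.2.le).trans (hfg x hx)

lemma AntitoneOn.ge_of_forall_ge_of_tendsto_nhdsLT {f g : ℝ → ℝ} {a b t ℓ : ℝ}
    (hf : AntitoneOn f (Ioo a b)) (ht : t ∈ Ioo a b) (hgf : ∀ x ∈ Ioo t b, g x ≤ f x)
    (hg : Tendsto g (𝓝[<] b) (𝓝 ℓ)) : ℓ ≤ f t := by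
  refine le_of_tendsto hg ?_
  filter_upwards [Ioo_mem_nhdsLT ht.2] with x hx
  exact (hgf x hx).trans (hf ht ⟨ht.1.trans hx.1, hx.2⟩ hx.1.le)

section Riccati

variable {s r : ℝ → ℝ}

lemma hasDerivAt_arctan_add_id_of_riccati {t : ℝ} (hs : HasDerivAt s (-(s t ^ 2 + r t)) t) :
    HasDerivAt (fun x => arctan (s x) + x) ((1 - r t) / (1 + s t ^ 2)) t := by
  refine (hs.arctan.add (hasDerivAt_id' t)).congr_deriv ?_
  field_simp
  ring

lemma antitoneOn_arctan_add_id_of_riccati {a b : ℝ}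
    (hs : ∀ t ∈ Ioo a b, HasDerivAt s (-(s t ^ 2 + r t)) t)
    (hr : ∀ t ∈ Ioo a b, 1 ≤ r t) :
    AntitoneOn (fun x => arctan (s x) + x) (Ioo a b) := by
  have hv := fun t ht => hasDerivAt_arctan_add_id_of_riccati (hs t ht)
  refine antitoneOn_of_hasDerivWithinAt_nonpos (f' := fun t => (1 - r t) / (1 + s t ^ 2))
    (convex_Ioo a b) (fun t ht => (hv t ht).continuousAt.continuousWithinAt) ?_ ?_ <;>
      rw [interior_Ioo]
  · exact fun t ht => (hv t ht).hasDerivWithinAt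
  · exact fun t ht => div_nonpos_of_nonpos_of_nonneg (by linarith [hr t ht]) (by positivity)

lemma pi_div_two_le_arctan_add_of_riccati {a t : ℝ} (ht : t ∈ Ioo a π)
    (hs : ∀ t ∈ Ioo a π, HasDerivAt s (-(s t ^ 2 + r t)) t)
    (hr : ∀ t ∈ Ioo a π, 1 ≤ r t) :
    π / 2 ≤ arctan (s t) + t := by
  refine (antitoneOn_arctan_add_id_of_riccati hs hr).ge_of_forall_ge_of_tendsto_nhdsLT ht
    (g := (· - π / 2)) (fun x _ => by linarith [neg_pi_div_two_lt_arctan (s x)]) ?_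
  convert ((continuous_sub_right (π / 2)).tendsto π).mono_left nhdsWithin_le_nhds using 2
  ring

lemma arctan_add_le_pi_div_two_of_riccati {α t : ℝ} (hα : α ∈ Ico 0 π) (ht : t ∈ Ioo α π)
    (hs : ∀ t ∈ Ioo α π, HasDerivAt s (-(s t ^ 2 + r t)) t)
    (hr : ∀ t ∈ Ioo α π, 1 ≤ r t)
    (hbd : α ≠ 0 → ∃ L, Tendsto s (𝓝[>] α) (𝓝 L) ∧ L ≤ cot α) :
    arctan (s t) + t ≤ π / 2 := by
  have hv := antitoneOn_arctan_add_id_of_riccati hs hr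
  rcases eq_or_ne α 0 with rfl | hα₀
  · refine hv.le_of_forall_le_of_tendsto_nhdsGT ht (g := fun x => x + π / 2)
      (fun x _ => by linarith [arctan_lt_pi_div_two (s x)]) ?_
    convert ((continuous_add_const (π / 2)).tendsto 0).mono_left nhdsWithin_le_nhds using 2
    ring
  · obtain ⟨L, hL, hLα⟩ := hbd hα₀
    have hα_pos : 0 < α := lt_of_le_of_ne hα.1 (Ne.symm hα₀)
    calc arctan (s t) + t ≤ arctan L + α := hv.le_of_forall_le_of_tendsto_nhdsGT ht
            (fun _ _ => le_rfl) (((continuous_arctan.tendsto L).comp hL).add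
              (tendsto_id.mono_left nhdsWithin_le_nhds))
      _ ≤ arctan (cot α) + α := by gcongr
      _ = π / 2 := by rw [arctan_cot hα_pos hα.2]; ring

end Riccati

theorem stmt_6_general (α : ℝ) (hα : α ∈ Set.Ico 0 π) (s r : ℝ → ℝ)
    (hs : ∀ t ∈ Set.Ioo α π, HasDerivAt s (-(s t ^ 2 + r t)) t)
    (hr : ∀ t ∈ Set.Ioo α π, 1 ≤ r t)
    (hbd : α ≠ 0 → ∃ L, Filter.Tendsto s (nhdsWithin α (Set.Ioi α)) (nhds L) ∧
      L ≤ Real.cot α) :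
    ∀ t ∈ Set.Ioo α π, s t = Real.cot t ∧ r t = 1 := by
  have hconst : ∀ t ∈ Ioo α π, arctan (s t) + t = π / 2 := fun t ht =>
    le_antisymm (arctan_add_le_pi_div_two_of_riccati hα ht hs hr hbd)
      (pi_div_two_le_arctan_add_of_riccati ht hs hr)
  intro t ht
  constructor
  · apply arctan_injective
    rw [arctan_cot (hα.1.trans_lt ht.1) ht.2]
    linarith [hconst t ht]
  · have hderiv_zero := (hasDerivAt_arctan_add_id_of_riccati (hs t ht)).unique <|
      (hasDerivAt_const t (π / 2)).congr_of_eventuallyEq <|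
        eventually_of_mem (isOpen_Ioo.mem_nhds ht) hconst
    have hpos : 1 + s t ^ 2 ≠ 0 := by positivity
    linarith [(div_eq_zero_iff.1 hderiv_zero).resolve_right hpos]

/-- Scalar infinitesimal maximal diameter theorem: a solution of `s' + s² + r = 0` on
`(α, π)` with `r ≥ 1` continuous, which (when `α ≠ 0`) extends continuously to `α` with
boundary value `≤ cot α`, must be `cot`, and then `r ≡ 1`. -/
theorem stmt_6 (α : ℝ) (hα : α ∈ Set.Ico 0 π) (s r : ℝ → ℝ)
    (hs : ∀ t ∈ Set.Ioo α π, HasDerivAt s (-(s t ^ 2 + r t)) t)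
    (hrc : ContinuousOn r (Set.Ioo α π))
    (hr : ∀ t ∈ Set.Ioo α π, 1 ≤ r t)
    (hbd : α ≠ 0 → ∃ L, Filter.Tendsto s (nhdsWithin α (Set.Ioi α)) (nhds L) ∧
      L ≤ Real.cot α) :
    ∀ t ∈ Set.Ioo α π, s t = Real.cot t ∧ r t = 1 :=
  stmt_6_general α hα s r hs hr hbd
end

section
/- Let S : (α, π) → End(ℝⁿ) be differentiable, self-adjoint valued, satisfying S' + S² + R = 0 with R(t) self-adjoint and trace R(t) ≥ n for all t. If the normalized trace s(t) = (1/n)trace S(t) equals cot(t) for all t ∈ (α, π), then S(t) = cot(t)·id and R(t) = id for all t ∈ (α, π). -/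
/-!
Let `S₀ = S - cot • id` be the traceless part of `S`. Tracing the Riccati equation and using
`cot' + cot² + 1 = 0` gives `trace (S₀²) + (trace R - n) = 0`, and both terms are nonnegative, so
`S₀ = 0`. Then `S' = cot' • id`, and the Riccati equation leaves `R = id`.
Since `trace S` is continuous and `cot` (which is `0` where `sin` vanishes) is discontinuous at
the zeros of `sin`, the hypothesis on `trace S` also forces `sin ≠ 0` on the whole interval.
-/

open Real Set

/-- Trace of a continuous linear endomorphism. -/
noncomputable def clmTrace (n : ℕ)
    (A : EuclideanSpace ℝ (Fin n) →L[ℝ] EuclideanSpace ℝ (Fin n)) : ℝ :=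
  LinearMap.trace ℝ (EuclideanSpace ℝ (Fin n)) (A : EuclideanSpace ℝ (Fin n) →ₗ[ℝ] EuclideanSpace ℝ (Fin n))

namespace Real

theorem cot_eq_tan_pi_div_two_sub (x : ℝ) : cot x = tan (π / 2 - x) := by
  rw [tan_pi_div_two_sub, tan_eq_sin_div_cos, cot_eq_cos_div_sin, inv_div]

theorem hasDerivAt_cot {x : ℝ} (h : sin x ≠ 0) : HasDerivAt cot (-1 - cot x ^ 2) x := by
  have hcos : cos (π / 2 - x) ≠ 0 := by rwa [cos_pi_div_two_sub]
  have key : HasDerivAt (fun y => tan (π / 2 - y)) (-1 - cot x ^ 2) x := by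
    refine ((hasDerivAt_tan hcos).comp x ((hasDerivAt_id x).const_sub (π / 2))).congr_deriv ?_
    rw [cos_pi_div_two_sub, cot_eq_cos_div_sin]
    field_simp
    linear_combination cos_sq_add_sin_sq x
  rwa [← funext cot_eq_tan_pi_div_two_sub] at key

theorem continuousAt_cot {x : ℝ} : ContinuousAt cot x ↔ sin x ≠ 0 := by
  refine ⟨fun h => ?_, fun h => (hasDerivAt_cot h).continuousAt⟩
  have htan : tan = cot ∘ (π / 2 - ·) := funext fun y => by simp [cot_eq_tan_pi_div_two_sub]
  rw [← cos_pi_div_two_sub, ← continuousAt_tan, htan]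
  exact h.comp_of_eq (by fun_prop) (sub_sub_cancel _ _)

end Real

namespace LinearMap

variable {E : Type*} [NormedAddCommGroup E] [InnerProductSpace ℝ E]

theorem IsSymmetric.trace_comp_self_eq_sum_norm_sq {T : E →ₗ[ℝ] E} (hT : T.IsSymmetric)
    {ι : Type*} [Fintype ι] (b : OrthonormalBasis ι ℝ E) :
    trace ℝ E (T ∘ₗ T) = ∑ i, ‖T (b i)‖ ^ 2 := by
  rw [trace_eq_sum_inner _ b]
  refine Fintype.sum_congr _ _ fun i => ?_
  rw [comp_apply, ← hT, real_inner_self_eq_norm_sq]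

theorem IsSymmetric.eq_zero_of_trace_comp_self_nonpos [FiniteDimensional ℝ E] {T : E →ₗ[ℝ] E}
    (hT : T.IsSymmetric) (h : trace ℝ E (T ∘ₗ T) ≤ 0) : T = 0 := by
  let b := stdOrthonormalBasis ℝ E
  rw [hT.trace_comp_self_eq_sum_norm_sq b] at h
  have hzero := (Finset.sum_eq_zero_iff_of_nonneg fun i _ => by positivity).mp
    (le_antisymm h (by positivity))
  refine b.toBasis.ext fun i => ?_
  simpa [b.coe_toBasis] using hzero i (Finset.mem_univ i)

theorem trace_sub_smul_id_comp_self {R M : Type*} [CommRing R] [AddCommGroup M] [Module R M]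
    [Module.Free R M] [Module.Finite R M] (T : M →ₗ[R] M) (c : R) :
    trace R M ((T - c • id) ∘ₗ (T - c • id)) =
      trace R M (T ∘ₗ T) - 2 * c * trace R M T + c ^ 2 * Module.finrank R M := by
  simp only [sub_comp, comp_sub, smul_comp, comp_smul, id_comp, comp_id, map_sub, map_smul,
    trace_id, smul_eq_mul]
  ring

theorem IsSymmetric.eq_smul_id_of_trace_comp_self_le [FiniteDimensional ℝ E] {T : E →ₗ[ℝ] E}
    (hT : T.IsSymmetric) {c : ℝ} (htr : trace ℝ E T = Module.finrank ℝ E * c)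
    (hsq : trace ℝ E (T ∘ₗ T) ≤ Module.finrank ℝ E * c ^ 2) : T = c • id := by
  rw [← sub_eq_zero]
  refine (hT.sub (IsSymmetric.id.smul (conj_trivial c))).eq_zero_of_trace_comp_self_nonpos ?_
  rw [trace_sub_smul_id_comp_self, htr]
  linarith

end LinearMap

open Filter Topology

section clmTrace

variable {n : ℕ}

local notation "E" => EuclideanSpace ℝ (Fin n)

variable (n) in
noncomputable def clmTraceCLM : (E →L[ℝ] E) →L[ℝ] ℝ :=
  LinearMap.toContinuousLinearMap (LinearMap.trace ℝ E ∘ₗ ContinuousLinearMap.coeLM ℝ)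

@[simp]
theorem clmTraceCLM_apply (A : E →L[ℝ] E) : clmTraceCLM n A = clmTrace n A := rfl

theorem HasDerivAt.clmTrace {S : ℝ → E →L[ℝ] E} {S' : E →L[ℝ] E} {t : ℝ}
    (h : HasDerivAt S S' t) : HasDerivAt (fun u => clmTrace n (S u)) (clmTrace n S') t :=
  (clmTraceCLM n).hasFDerivAt.comp_hasDerivAt t h

theorem IsSelfAdjoint.eq_smul_id_of_clmTrace_comp_self_le {A : E →L[ℝ] E} (hA : IsSelfAdjoint A)
    {c : ℝ} (htr : clmTrace n A = n * c) (hsq : clmTrace n (A ∘L A) ≤ n * c ^ 2) :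
    A = c • ContinuousLinearMap.id ℝ E := by
  apply ContinuousLinearMap.coe_injective
  refine hA.isSymmetric.eq_smul_id_of_trace_comp_self_le ?_ ?_ <;>
    rwa [finrank_euclideanSpace_fin]

theorem eq_cot_smul_id_of_riccati {S : ℝ → E →L[ℝ] E} {S' R : E →L[ℝ] E} {t : ℝ}
    (hsin : sin t ≠ 0) (hS : HasDerivAt S S' t) (hsa : IsSelfAdjoint (S t))
    (htrR : (n : ℝ) ≤ clmTrace n R) (hric : S' + S t ∘L S t + R = 0)
    (htr : ∀ᶠ u in 𝓝 t, clmTrace n (S u) = n * cot u) :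
    S t = cot t • ContinuousLinearMap.id ℝ E := by
  have htrS' : clmTrace n S' = n * (-1 - cot t ^ 2) :=
    hS.clmTrace.unique <| ((hasDerivAt_cot hsin).const_mul (n : ℝ)).congr_of_eventuallyEq htr
  have htrRic : clmTrace n S' + clmTrace n (S t ∘L S t) + clmTrace n R = 0 := by
    simpa only [map_add, map_zero, clmTraceCLM_apply] using congrArg (clmTraceCLM n) hric
  refine hsa.eq_smul_id_of_clmTrace_comp_self_le htr.self_of_nhds ?_
  linarith

end clmTrace

theorem stmt_8_general (n : ℕ) (hn : 1 ≤ n) (α : ℝ)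
    (S S' R : ℝ → EuclideanSpace ℝ (Fin n) →L[ℝ] EuclideanSpace ℝ (Fin n))
    (hS : ∀ t ∈ Set.Ioo α π, HasDerivAt S (S' t) t)
    (hsa : ∀ t ∈ Set.Ioo α π, IsSelfAdjoint (S t))
    (htrR : ∀ t ∈ Set.Ioo α π, (n : ℝ) ≤ clmTrace n (R t))
    (hric : ∀ t ∈ Set.Ioo α π, S' t + S t ∘L S t + R t = 0)
    (htr : ∀ t ∈ Set.Ioo α π, (1 / n : ℝ) * clmTrace n (S t) = Real.cot t) :
    ∀ t ∈ Set.Ioo α π,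
      S t = Real.cot t • ContinuousLinearMap.id ℝ (EuclideanSpace ℝ (Fin n)) ∧
      R t = ContinuousLinearMap.id ℝ (EuclideanSpace ℝ (Fin n)) := by
  have hn0 : (n : ℝ) ≠ 0 := by positivity
  have hnear : ∀ t ∈ Ioo α π, ∀ᶠ u in 𝓝 t, u ∈ Ioo α π := fun t ht => isOpen_Ioo.mem_nhds ht
  have htrS : ∀ t ∈ Ioo α π, clmTrace n (S t) = n * cot t := fun t ht => by
    rw [← htr t ht]; field_simp
  have hsin : ∀ t ∈ Ioo α π, sin t ≠ 0 := fun t ht => continuousAt_cot.mp <|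
    ((hS t ht).clmTrace.continuousAt.const_mul (1 / n : ℝ)).congr ((hnear t ht).mono htr)
  have hScot : ∀ t ∈ Ioo α π, S t = cot t • ContinuousLinearMap.id ℝ _ := fun t ht =>
    eq_cot_smul_id_of_riccati (hsin t ht) (hS t ht) (hsa t ht) (htrR t ht) (hric t ht)
      ((hnear t ht).mono htrS)
  intro t ht
  refine ⟨hScot t ht, ?_⟩
  have hS' : S' t = (-1 - cot t ^ 2) • ContinuousLinearMap.id ℝ _ :=
    (hS t ht).unique <| ((hasDerivAt_cot (hsin t ht)).smul_const
      (ContinuousLinearMap.id ℝ (EuclideanSpace ℝ (Fin n)))).congr_of_eventuallyEq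
      ((hnear t ht).mono hScot)
  rw [eq_neg_of_add_eq_zero_right (hric t ht), hS', hScot t ht]
  simp only [ContinuousLinearMap.smul_comp, ContinuousLinearMap.comp_smul,
    ContinuousLinearMap.id_comp, smul_smul]
  module

/-- If a self-adjoint solution of the operator Riccati equation `S' + S² + R = 0`, with
`R` self-adjoint and `trace R ≥ n`, has normalized trace `(1/n) trace S(t) = cot t` on
`(α, π)`, then `S(t) = cot t • id` and `R(t) = id` there. -/
theorem stmt_8 (n : ℕ) (hn : 1 ≤ n) (α : ℝ)
    (S S' R : ℝ → EuclideanSpace ℝ (Fin n) →L[ℝ] EuclideanSpace ℝ (Fin n))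
    (hS : ∀ t ∈ Set.Ioo α π, HasDerivAt S (S' t) t)
    (hsa : ∀ t ∈ Set.Ioo α π, IsSelfAdjoint (S t))
    (hRsa : ∀ t ∈ Set.Ioo α π, IsSelfAdjoint (R t))
    (htrR : ∀ t ∈ Set.Ioo α π, (n : ℝ) ≤ clmTrace n (R t))
    (hric : ∀ t ∈ Set.Ioo α π, S' t + S t ∘L S t + R t = 0)
    (htr : ∀ t ∈ Set.Ioo α π, (1 / n : ℝ) * clmTrace n (S t) = Real.cot t) :
    ∀ t ∈ Set.Ioo α π,
      S t = Real.cot t • ContinuousLinearMap.id ℝ (EuclideanSpace ℝ (Fin n)) ∧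
      R t = ContinuousLinearMap.id ℝ (EuclideanSpace ℝ (Fin n)) :=
  stmt_8_general n hn α S S' R hS hsa htrR hric htr
end

section
/- Let S : (0, ∞) → End(V) be a differentiable path of self-adjoint operators on a finite-dimensional real inner product space V, satisfying S' + S² + R = 0 where R(t) is self-adjoint with trace R(t) ≥ 0 for all t. If S is defined for all t ∈ ℝ (i.e., extends to a solution on all of ℝ), then S ≡ 0 and R ≡ 0. -/
/-!
Taking traces, `f = tr S` satisfies `f' = -tr S² - tr R ≤ -tr S² ≤ -f² / n` with `n = dim V`,
by Cauchy–Schwarz. A real function with `f² ≤ -n f'` on all of `ℝ` vanishes: where `f < 0`,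
`n / f - t` is nondecreasing, so `f` blows up in finite forward time, and time reversal handles
`f > 0`. Hence `tr S ≡ 0`, so `tr S² + tr R = 0` with both terms nonnegative; this forces `S ≡ 0`,
and then `R = -S' ≡ 0`.
-/

open Set

theorem nonneg_of_sq_le_neg_mul_deriv {f f' : ℝ → ℝ} {c : ℝ} (hc : 0 < c)
    (hf : ∀ t, HasDerivAt f (f' t) t) (hle : ∀ t, f t ^ 2 ≤ -(c * f' t)) (a : ℝ) :
    0 ≤ f a := by
  by_contra! ha
  have hanti : Antitone f := antitone_of_hasDerivAt_nonpos hf fun t =>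
    nonpos_of_mul_nonpos_right (by nlinarith [hle t, sq_nonneg (f t)]) hc
  have hneg : ∀ t ∈ Ici a, f t < 0 := fun t ht => (hanti ht).trans_lt ha
  -- `c / f - t` is nondecreasing on `[a, ∞)`, so `c / f < 0` would reach `0` by time `a - c / f a`.
  have hmono : MonotoneOn (fun t => c * (f t)⁻¹ - t) (Ici a) := by
    have hderiv : ∀ t ∈ Ici a,
        HasDerivAt (fun t => c * (f t)⁻¹ - t) (c * (-f' t / f t ^ 2) - 1) t := fun t ht =>
      (((hf t).inv (hneg t ht).ne).const_mul c).sub (hasDerivAt_id t)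
    refine monotoneOn_of_hasDerivWithinAt_nonneg (convex_Ici a)
      (fun t ht => (hderiv t ht).continuousAt.continuousWithinAt)
      (fun t ht => (hderiv t (interior_subset ht)).hasDerivWithinAt) fun t ht => ?_
    have hsq : 0 < f t ^ 2 := by have := (hneg t (interior_subset ht)).ne; positivity
    rw [sub_nonneg, mul_div_assoc', le_div_iff₀ hsq]
    linarith [hle t]
  set b := a - c * (f a)⁻¹
  have hab : a ≤ b := by linarith [mul_neg_of_pos_of_neg hc (inv_lt_zero.mpr ha)]
  linarith [hmono self_mem_Ici hab hab, mul_neg_of_pos_of_neg hc (inv_lt_zero.mpr (hneg b hab))]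

theorem eq_zero_of_sq_le_neg_mul_deriv {f f' : ℝ → ℝ} {c : ℝ} (hc : 0 ≤ c)
    (hf : ∀ t, HasDerivAt f (f' t) t) (hle : ∀ t, f t ^ 2 ≤ -(c * f' t)) (a : ℝ) :
    f a = 0 := by
  rcases hc.eq_or_lt with rfl | hc
  · simpa using hle a
  have hf_rev : ∀ t, HasDerivAt (fun t => -f (-t)) (f' (-t)) t := fun t => by
    have := ((hf (-t)).comp t (hasDerivAt_neg t)).neg
    rwa [mul_neg_one, neg_neg] at this
  have hle_rev : ∀ t, (-f (-t)) ^ 2 ≤ -(c * f' (-t)) := fun t => by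
    simpa only [neg_sq] using hle (-t)
  have hnonpos := nonneg_of_sq_le_neg_mul_deriv hc hf_rev hle_rev (-a)
  rw [neg_neg, neg_nonneg] at hnonpos
  exact le_antisymm hnonpos (nonneg_of_sq_le_neg_mul_deriv hc hf hle a)

open RealInnerProductSpace

namespace LinearMap.IsSymmetric

variable {V : Type*} [NormedAddCommGroup V] [InnerProductSpace ℝ V] {T : V →ₗ[ℝ] V}

theorem trace_comp_self_eq_sum_norm_sq_s10 (hT : T.IsSymmetric) {ι : Type*} [Fintype ι]
    (b : OrthonormalBasis ι ℝ V) : trace ℝ V (T ∘ₗ T) = ∑ i, ‖T (b i)‖ ^ 2 := by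
  rw [trace_eq_sum_inner _ b]
  refine Finset.sum_congr rfl fun i _ => ?_
  rw [comp_apply, ← hT, real_inner_self_eq_norm_sq]

variable [FiniteDimensional ℝ V]

theorem trace_comp_self_nonneg (hT : T.IsSymmetric) : 0 ≤ trace ℝ V (T ∘ₗ T) := by
  rw [hT.trace_comp_self_eq_sum_norm_sq_s10 (stdOrthonormalBasis ℝ V)]
  positivity

theorem eq_zero_of_trace_comp_self_eq_zero (hT : T.IsSymmetric)
    (h : trace ℝ V (T ∘ₗ T) = 0) : T = 0 := by
  let b := stdOrthonormalBasis ℝ V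
  rw [hT.trace_comp_self_eq_sum_norm_sq_s10 b,
    Finset.sum_eq_zero_iff_of_nonneg fun i _ => by positivity] at h
  exact b.toBasis.ext fun i => by simpa using h i (Finset.mem_univ i)

theorem sq_trace_le_finrank_mul_trace_comp_self (hT : T.IsSymmetric) :
    trace ℝ V T ^ 2 ≤ Module.finrank ℝ V * trace ℝ V (T ∘ₗ T) := by
  let b := stdOrthonormalBasis ℝ V
  rw [trace_eq_sum_inner T b, hT.trace_comp_self_eq_sum_norm_sq_s10 b]
  calc (∑ i, ⟪b i, T (b i)⟫) ^ 2
      ≤ Module.finrank ℝ V * ∑ i, ⟪b i, T (b i)⟫ ^ 2 := by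
        simpa using sq_sum_le_card_mul_sum_sq (s := Finset.univ) (f := fun i => ⟪b i, T (b i)⟫)
    _ ≤ Module.finrank ℝ V * ∑ i, ‖T (b i)‖ ^ 2 := by
        refine mul_le_mul_of_nonneg_left
          (Finset.sum_le_sum fun i _ => sq_le_sq.mpr ?_) (by positivity)
        simpa [b.orthonormal.1 i] using abs_real_inner_le_norm (b i) (T (b i))

end LinearMap.IsSymmetric

theorem HasDerivAt.trace {𝕜 E : Type*} [NontriviallyNormedField 𝕜] [CompleteSpace 𝕜]
    [NormedAddCommGroup E] [NormedSpace 𝕜 E] [FiniteDimensional 𝕜 E]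
    {A : 𝕜 → E →L[𝕜] E} {A' : E →L[𝕜] E} {t : 𝕜} (h : HasDerivAt A A' t) :
    HasDerivAt (fun s => LinearMap.trace 𝕜 E (A s : E →ₗ[𝕜] E))
      (LinearMap.trace 𝕜 E (A' : E →ₗ[𝕜] E)) t :=
  (LinearMap.toContinuousLinearMap
    (LinearMap.trace 𝕜 E ∘ₗ ContinuousLinearMap.coeLM 𝕜)).hasFDerivAt.comp_hasDerivAt t h

theorem stmt_10_general (V : Type*) [NormedAddCommGroup V] [InnerProductSpace ℝ V]
    [FiniteDimensional ℝ V]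
    (S S' R : ℝ → V →L[ℝ] V)
    (hS : ∀ t : ℝ, HasDerivAt S (S' t) t)
    (hsa : ∀ t : ℝ, IsSelfAdjoint (S t))
    (htrR : ∀ t : ℝ, (0 : ℝ) ≤ LinearMap.trace ℝ V (R t : V →ₗ[ℝ] V))
    (hric : ∀ t : ℝ, S' t + S t ∘L S t + R t = 0) :
    ∀ t : ℝ, S t = 0 ∧ R t = 0 := by
  have hsym : ∀ t, (S t : V →ₗ[ℝ] V).IsSymmetric := fun t => (hsa t).isSymmetric
  have hric_trace : ∀ t, LinearMap.trace ℝ V (S' t)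
      + LinearMap.trace ℝ V ((S t : V →ₗ[ℝ] V) ∘ₗ S t) + LinearMap.trace ℝ V (R t) = 0 :=
    fun t => by simpa using congrArg (fun A : V →L[ℝ] V => LinearMap.trace ℝ V A) (hric t)
  have htrS : ∀ t, LinearMap.trace ℝ V (S t) = 0 :=
    eq_zero_of_sq_le_neg_mul_deriv (Nat.cast_nonneg _) (fun t => (hS t).trace) fun t => by
      nlinarith [(hsym t).sq_trace_le_finrank_mul_trace_comp_self, htrR t, hric_trace t,
        (Nat.cast_nonneg (Module.finrank ℝ V) : (0 : ℝ) ≤ _)]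
  have htrS' : ∀ t, LinearMap.trace ℝ V (S' t) = 0 := fun t =>
    (hS t).trace.unique (by simpa only [htrS] using hasDerivAt_const t (0 : ℝ))
  have hS0 : ∀ t, S t = 0 := fun t => ContinuousLinearMap.coe_injective <|
    (hsym t).eq_zero_of_trace_comp_self_eq_zero <| by
      linarith [(hsym t).trace_comp_self_nonneg, htrR t, hric_trace t, htrS' t]
  have hS'0 : ∀ t, S' t = 0 := fun t =>
    (hS t).unique (by simpa only [show S = fun _ => 0 from funext hS0] using hasDerivAt_const t 0)
  exact fun t => ⟨hS0 t, by simpa [hS0 t, hS'0 t] using hric t⟩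

/-- Operator core of the infinitesimal splitting theorem: a self-adjoint solution of
`S' + S² + R = 0` on all of `ℝ`, with `R` self-adjoint and `trace R ≥ 0`, satisfies
`S ≡ 0` and `R ≡ 0`. -/
theorem stmt_10 (V : Type*) [NormedAddCommGroup V] [InnerProductSpace ℝ V]
    [FiniteDimensional ℝ V] [CompleteSpace V]
    (S S' R : ℝ → V →L[ℝ] V)
    (hS : ∀ t : ℝ, HasDerivAt S (S' t) t)
    (hsa : ∀ t : ℝ, IsSelfAdjoint (S t))
    (hRsa : ∀ t : ℝ, IsSelfAdjoint (R t))
    (htrR : ∀ t : ℝ, (0 : ℝ) ≤ LinearMap.trace ℝ V (R t : V →ₗ[ℝ] V))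
    (hric : ∀ t : ℝ, S' t + S t ∘L S t + R t = 0) :
    ∀ t : ℝ, S t = 0 ∧ R t = 0 :=
  stmt_10_general V S S' R hS hsa htrR hric
end

section
/- Scalar version of the infinitesimal splitting theorem: if s : ℝ → ℝ is differentiable and satisfies s'(t) + s(t)² + r(t) = 0 for all t ∈ ℝ, where r : ℝ → ℝ is continuous with r(t) ≥ 0, then s(t) = 0 and r(t) = 0 for all t. -/
/-!
Along a solution of the Riccati inequality `s' ≤ -s²`, wherever `s ≠ 0` the function
`1/s - t` is nondecreasing, which is the comparison with the explicit solutions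
`1/(t - c)` of `x' = -x²`. Since `s` is antitone, `s(t₀) > 0` keeps `s` positive on
`(-∞, t₀]`, and monotonicity of `1/s - t` there forces `1/s` to vanish at
`t₀ - 1/s(t₀)`: the solution blows up in finite backward time. Reflecting
`t ↦ -s(-t)` rules out `s(t₀) < 0`, so `s ≡ 0`, and then the equation gives `r ≡ 0`.
-/

open Set

section Riccati

variable {s s' : ℝ → ℝ}

theorem monotoneOn_inv_sub_id_of_riccati {D : Set ℝ} (hD : Convex ℝ D)
    (hs : ∀ t ∈ D, HasDerivAt s (s' t) t) (hle : ∀ t ∈ D, s' t ≤ -s t ^ 2)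
    (hne : ∀ t ∈ D, s t ≠ 0) :
    MonotoneOn (fun t => (s t)⁻¹ - t) D := by
  have hderiv : ∀ t ∈ D, HasDerivAt (fun t => (s t)⁻¹ - t) (-s' t / s t ^ 2 - 1) t :=
    fun t ht => ((hs t ht).inv (hne t ht)).sub (hasDerivAt_id t)
  refine monotoneOn_of_hasDerivWithinAt_nonneg hD
    (fun t ht => (hderiv t ht).continuousAt.continuousWithinAt)
    (fun t ht => (hderiv t (interior_subset ht)).hasDerivWithinAt) fun t ht => ?_
  have hsq : 0 < s t ^ 2 := pow_two_pos_of_ne_zero (hne t (interior_subset ht))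
  rw [sub_nonneg, le_div_iff₀ hsq]
  linarith [hle t (interior_subset ht)]

theorem nonpos_of_riccati (hs : ∀ t, HasDerivAt s (s' t) t) (hle : ∀ t, s' t ≤ -s t ^ 2)
    (t₀ : ℝ) : s t₀ ≤ 0 := by
  by_contra! hpos
  have hanti : Antitone s :=
    antitone_of_hasDerivAt_nonpos hs fun t => (hle t).trans (neg_nonpos.2 (sq_nonneg _))
  have hposIic : ∀ t ∈ Iic t₀, 0 < s t := fun t ht => hpos.trans_le (hanti ht)
  have hmono := monotoneOn_inv_sub_id_of_riccati (convex_Iic t₀) (fun t _ => hs t)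
    (fun t _ => hle t) fun t ht => (hposIic t ht).ne'
  set t₁ := t₀ - (s t₀)⁻¹
  have ht₁ : t₁ ∈ Iic t₀ := by
    simp only [t₁, mem_Iic, sub_le_self_iff, inv_nonneg, hpos.le]
  have hle₁ : (s t₁)⁻¹ - t₁ ≤ (s t₀)⁻¹ - t₀ := hmono ht₁ self_mem_Iic ht₁
  have : 0 < (s t₁)⁻¹ := inv_pos.2 (hposIic t₁ ht₁)
  linarith

theorem eq_zero_of_riccati (hs : ∀ t, HasDerivAt s (s' t) t) (hle : ∀ t, s' t ≤ -s t ^ 2)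
    (t : ℝ) : s t = 0 := by
  have hreflect : ∀ t, HasDerivAt (fun t => -s (-t)) (s' (-t)) t := fun t =>
    (((hs (-t)).comp t (hasDerivAt_neg t)).neg).congr_deriv (by ring)
  have hnonneg : 0 ≤ s t := by
    simpa using nonpos_of_riccati hreflect (fun t => by simpa using hle (-t)) (-t)
  exact le_antisymm (nonpos_of_riccati hs hle t) hnonneg

end Riccati

theorem stmt_11_general (s r : ℝ → ℝ)
    (hs : ∀ t : ℝ, HasDerivAt s (-(s t ^ 2 + r t)) t)
    (hr : ∀ t : ℝ, 0 ≤ r t) :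
    ∀ t : ℝ, s t = 0 ∧ r t = 0 := by
  have hzero : ∀ t, s t = 0 := eq_zero_of_riccati hs fun t => by linarith [hr t]
  intro t
  have hconst : HasDerivAt s 0 t := by
    simpa only [funext hzero] using hasDerivAt_const t (0 : ℝ)
  have hderiv := (hs t).unique hconst
  rw [hzero t] at hderiv
  exact ⟨hzero t, by linarith⟩

/-- Scalar infinitesimal splitting theorem: if `s' + s² + r = 0` on all of `ℝ` with
`r` continuous and `r ≥ 0`, then `s ≡ 0` and `r ≡ 0`. -/
theorem stmt_11 (s r : ℝ → ℝ)
    (hs : ∀ t : ℝ, HasDerivAt s (-(s t ^ 2 + r t)) t)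
    (hrc : Continuous r)
    (hr : ∀ t : ℝ, 0 ≤ r t) :
    ∀ t : ℝ, s t = 0 ∧ r t = 0 :=
  stmt_11_general s r hs hr
end

section
/- Let f : [α, t₀) → ℝ and s : [α, t₀) → ℝ be differentiable with f' + f² + 1 = 0 and s' + s² + r = 0 where r ≥ 1 is continuous, and suppose lim_{t→t₀⁻} (f(t) - s(t)) = 0 and f(t) = cot(t - c) for some c ∈ (0, α). Then s(α) ≥ f(α) > cot(α). -/
/-!
Put `g = f - s`. The two Riccati equations give `g' = -2 f g + g² + (r - 1)`, so wherever
`g > 0` we have `g' > -2 f(α) g`, because `f = cot (· - c)` is decreasing. If `g(α) > 0`,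
the fencing theorem keeps `g` above the exponential `g(α) e^{-2 f(α) (t - α)}`, which stays
bounded away from `0` up to `t₀`, contradicting `g → 0`.
-/

open Real Set Filter

theorem Real.strictAntiOn_cot : StrictAntiOn cot (Ioo 0 π) := by
  intro x hx y hy hxy
  have hsin_x : 0 < sin x := sin_pos_of_pos_of_lt_pi hx.1 hx.2
  have hsin_y : 0 < sin y := sin_pos_of_pos_of_lt_pi hy.1 hy.2
  have hsin_sub : 0 < sin (y - x) :=
    sin_pos_of_pos_of_lt_pi (by linarith) (by linarith [hx.1, hy.2])
  rw [cot_eq_cos_div_sin, cot_eq_cos_div_sin, div_lt_div_iff₀ hsin_y hsin_x]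
  nlinarith [sin_sub y x]

theorem mul_exp_le_of_hasDerivWithinAt {g g' : ℝ → ℝ} {a b K : ℝ}
    (hg : ∀ x ∈ Ico a b, HasDerivWithinAt g (g' x) (Ico a b) x)
    (hg' : ∀ x ∈ Ico a b, 0 < g x → -(K * g x) < g' x) (ha : 0 < g a) :
    ∀ x ∈ Ico a b, g a * exp (-(K * (x - a))) ≤ g x := by
  intro x hx
  have hsub : Icc a x ⊆ Ico a b := Icc_subset_Ico_right hx.2
  have hsub' : Ico a x ⊆ Ico a b := Ico_subset_Icc_self.trans hsub
  set φ : ℝ → ℝ := fun t => g a * exp (-(K * (t - a)))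
  have hφ : ∀ t, HasDerivAt φ (-(K * φ t)) t := fun t => by
    have := ((hasDerivAt_id t).sub_const a).const_mul K |>.neg.exp.const_mul (g a)
    simpa [φ, mul_comm, mul_left_comm] using this
  refine image_le_of_deriv_right_lt_deriv_boundary' (by fun_prop)
    (fun t _ => (hφ t).hasDerivWithinAt) (by simp [φ])
    (fun t ht => (hg t (hsub ht)).continuousWithinAt.mono hsub)
    (fun t ht => (hg t (hsub' ht)).mono_of_mem_nhdsWithin (Ico_mem_nhdsGE_of_mem (hsub' ht)))
    (fun t ht heq => ?_) ⟨hx.1, le_rfl⟩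
  rw [heq]
  exact hg' t (hsub' ht) (heq ▸ by positivity)

theorem mul_exp_le_sub_of_riccati {f s r : ℝ → ℝ} {a b M : ℝ}
    (hf : ∀ t ∈ Ico a b, HasDerivWithinAt f (-(f t ^ 2 + 1)) (Ico a b) t)
    (hs : ∀ t ∈ Ico a b, HasDerivWithinAt s (-(s t ^ 2 + r t)) (Ico a b) t)
    (hr : ∀ t ∈ Ico a b, 1 ≤ r t) (hM : ∀ t ∈ Ico a b, f t ≤ M) (ha : s a < f a) :
    ∀ t ∈ Ico a b, (f a - s a) * exp (-(2 * M * (t - a))) ≤ f t - s t := by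
  refine mul_exp_le_of_hasDerivWithinAt (fun t ht => (hf t ht).sub (hs t ht))
    (fun t ht hpos => ?_) (sub_pos.2 ha)
  have hgap : -(f t ^ 2 + 1) - -(s t ^ 2 + r t) =
      -2 * f t * (f t - s t) + (f t - s t) ^ 2 + (r t - 1) := by
    ring
  simp only [Pi.sub_apply] at hpos ⊢
  rw [hgap]
  nlinarith [hM t ht, hr t ht, sq_pos_of_pos hpos]

theorem stmt_16_general (α t₀ c : ℝ) (hα : 0 < α) (hαt₀ : α < t₀) (ht₀ : t₀ ≤ π)
    (hc : c ∈ Set.Ioo 0 α) (f s r : ℝ → ℝ)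
    (hf : ∀ t ∈ Set.Ico α t₀, HasDerivWithinAt f (-(f t ^ 2 + 1)) (Set.Ico α t₀) t)
    (hs : ∀ t ∈ Set.Ico α t₀, HasDerivWithinAt s (-(s t ^ 2 + r t)) (Set.Ico α t₀) t)
    (hr : ∀ t ∈ Set.Ico α t₀, 1 ≤ r t)
    (hfc : ∀ t ∈ Set.Ico α t₀, f t = Real.cot (t - c))
    (hlim : Filter.Tendsto (fun t => f t - s t) (nhdsWithin t₀ (Set.Iio t₀)) (nhds 0)) :
    f α ≤ s α ∧ Real.cot α < f α := by
  have hα_mem : α ∈ Ico α t₀ := ⟨le_rfl, hαt₀⟩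
  have hshift_mem : ∀ t ∈ Ico α t₀, t - c ∈ Ioo 0 π := fun t ht =>
    ⟨by linarith [hc.2, ht.1], by linarith [hc.1, ht.2]⟩
  refine ⟨?_, ?_⟩
  · by_contra! hsf
    have hf_le : ∀ t ∈ Ico α t₀, f t ≤ f α := fun t ht => by
      rw [hfc t ht, hfc α hα_mem]
      exact strictAntiOn_cot.antitoneOn (hshift_mem α hα_mem) (hshift_mem t ht)
        (by linarith [ht.1])
    have hlower := mul_exp_le_sub_of_riccati hf hs hr hf_le hsf
    set φ : ℝ → ℝ := fun t => (f α - s α) * exp (-(2 * f α * (t - α)))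
    have hφ : Tendsto φ (nhdsWithin t₀ (Iio t₀)) (nhds (φ t₀)) :=
      ((by fun_prop : Continuous φ).tendsto t₀).mono_left nhdsWithin_le_nhds
    have hφ_nonpos : φ t₀ ≤ 0 :=
      le_of_tendsto_of_tendsto hφ hlim (eventually_of_mem (Ico_mem_nhdsLT hαt₀) hlower)
    have hφ_pos : 0 < φ t₀ := mul_pos (sub_pos.2 hsf) (exp_pos _)
    linarith
  · rw [hfc α hα_mem]
    exact strictAntiOn_cot (hshift_mem α hα_mem) ⟨hα, hαt₀.trans_le ht₀⟩ (by linarith [hc.1])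

/-- If `f t = cot (t - c)` with `c ∈ (0, α)` solves `f' + f² + 1 = 0` on `[α, t₀)`,
`s` solves `s' + s² + r = 0` there with `r ≥ 1` continuous, and `f - s → 0` as `t → t₀⁻`,
then `s α ≥ f α > cot α`. -/
theorem stmt_16 (α t₀ c : ℝ) (hα : 0 < α) (hαt₀ : α < t₀) (ht₀ : t₀ ≤ π)
    (hc : c ∈ Set.Ioo 0 α) (f s r : ℝ → ℝ)
    (hf : ∀ t ∈ Set.Ico α t₀, HasDerivWithinAt f (-(f t ^ 2 + 1)) (Set.Ico α t₀) t)
    (hs : ∀ t ∈ Set.Ico α t₀, HasDerivWithinAt s (-(s t ^ 2 + r t)) (Set.Ico α t₀) t)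
    (hrc : ContinuousOn r (Set.Ico α t₀))
    (hr : ∀ t ∈ Set.Ico α t₀, 1 ≤ r t)
    (hfc : ∀ t ∈ Set.Ico α t₀, f t = Real.cot (t - c))
    (hlim : Filter.Tendsto (fun t => f t - s t) (nhdsWithin t₀ (Set.Iio t₀)) (nhds 0)) :
    f α ≤ s α ∧ Real.cot α < f α :=
  stmt_16_general α t₀ c hα hαt₀ ht₀ hc f s r hf hs hr hfc hlim
end
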